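/- arXiv:2110.06791 — 2 statements merged into one kernel-verified Lean document; each statement's English description precedes it below -/
import Mathlib

section
/- For every real x > 0, the series ∑_{m=0}^∞ 1/(m!·Γ(m+1))·(x/2)^{2m} equals (1/(π x)) · ∫_0^π ( sinh(x·sin φ) + x·sin φ · cosh(x·sin φ) ) · sin φ dφ. -/
open Real MeasureTheory

/-!
Expanding `cosh (x * sin φ)` in powers of `x * sin φ` and integrating term by term with the Wallis
integrals `∫₀^π sin^(2m) = π (2m)! / (4^m (m!)²)` gives `∫₀^π cosh (x sin φ) dφ = π I₀(x)`.
The integrand of the theorem is `x cosh (x sin φ)` plus the derivative of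
`-cos φ sinh (x sin φ)`, which vanishes at both `0` and `π`.
-/

open Nat in
theorem integral_sin_pow_two_mul (n : ℕ) :
    ∫ θ in (0:ℝ)..π, sin θ ^ (2 * n) = π * (2 * n)! / (4 ^ n * (n ! : ℝ) ^ 2) := by
  induction n with
  | zero => simp
  | succ k ih =>
    rw [mul_add, mul_one, integral_sin_pow, ih]
    push_cast [Nat.factorial_succ, show 2 * k + 2 = (2 * k + 1) + 1 by ring, sin_zero, sin_pi]
    field_simp
    ring

open Nat in
theorem hasSum_integral_cosh_mul_sin (x : ℝ) :
    HasSum (fun m : ℕ ↦ π * ((x / 2) ^ (2 * m) / (m ! : ℝ) ^ 2))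
      (∫ θ in (0:ℝ)..π, cosh (x * sin θ)) := by
  have hterm (m : ℕ) : ∫ θ in (0:ℝ)..π, (x * sin θ) ^ (2 * m) / (2 * m)!
      = π * ((x / 2) ^ (2 * m) / (m ! : ℝ) ^ 2) := by
    have hpow : (2:ℝ) ^ (2 * m) = 4 ^ m := by rw [pow_mul]; norm_num
    simp_rw [mul_pow, mul_div_right_comm, intervalIntegral.integral_const_mul,
      integral_sin_pow_two_mul, div_pow, hpow]
    field_simp
  simp_rw [← hterm]
  refine intervalIntegral.hasSum_integral_of_dominated_convergence
    (fun m _ ↦ |x| ^ (2 * m) / (2 * m)!) (fun _ ↦ by fun_prop)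
    (fun _ ↦ .of_forall fun θ _ ↦ ?_)
    (.of_forall fun _ _ ↦ (hasSum_cosh |x|).summable) intervalIntegrable_const
    (.of_forall fun θ _ ↦ hasSum_cosh (x * sin θ))
  rw [norm_div, norm_pow, Real.norm_eq_abs, Real.norm_natCast, abs_mul]
  gcongr
  exact mul_le_of_le_one_right (abs_nonneg x) (abs_sin_le_one θ)

theorem integral_sinh_add_mul_cosh_mul_sin (x : ℝ) :
    ∫ θ in (0:ℝ)..π, (sinh (x * sin θ) + x * sin θ * cosh (x * sin θ)) * sin θ
      = x * ∫ θ in (0:ℝ)..π, cosh (x * sin θ) := by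
  have hderiv (θ : ℝ) : HasDerivAt (fun θ ↦ -cos θ * sinh (x * sin θ))
      ((sinh (x * sin θ) + x * sin θ * cosh (x * sin θ)) * sin θ - x * cosh (x * sin θ)) θ := by
    have h := ((hasDerivAt_cos θ).neg).mul
      ((hasDerivAt_sinh _).comp θ ((hasDerivAt_sin θ).const_mul x))
    refine h.congr_deriv ?_
    simp only [Function.comp_apply, Pi.neg_apply]
    linear_combination -x * cosh (x * sin θ) * sin_sq_add_cos_sq θ
  have hzero : ∫ θ in (0:ℝ)..π,
      ((sinh (x * sin θ) + x * sin θ * cosh (x * sin θ)) * sin θ - x * cosh (x * sin θ)) = 0 := by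
    rw [intervalIntegral.integral_eq_sub_of_hasDerivAt (fun θ _ ↦ hderiv θ)
      (by apply Continuous.intervalIntegrable; fun_prop)]
    simp
  rwa [intervalIntegral.integral_sub (by apply Continuous.intervalIntegrable; fun_prop)
    (by apply Continuous.intervalIntegrable; fun_prop), intervalIntegral.integral_const_mul,
    sub_eq_zero] at hzero

theorem bessel_I0_integral_representation (x : ℝ) (hx : 0 < x) :
    ∑' m : ℕ, 1 / (m.factorial * Real.Gamma (m + 1)) * (x / 2) ^ (2 * m)
      = (1 / (π * x)) *
        ∫ φ in (0:ℝ)..π,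
          (Real.sinh (x * Real.sin φ) + x * Real.sin φ * Real.cosh (x * Real.sin φ)) *
            Real.sin φ := by
  have hterm (m : ℕ) : 1 / (m.factorial * Real.Gamma (m + 1)) * (x / 2) ^ (2 * m)
      = (x / 2) ^ (2 * m) / (m.factorial : ℝ) ^ 2 := by
    rw [Real.Gamma_nat_eq_factorial]
    ring
  rw [integral_sinh_add_mul_cosh_mul_sin, ← (hasSum_integral_cosh_mul_sin x).tsum_eq,
    tsum_mul_left]
  simp_rw [hterm]
  field_simp [hx.ne', pi_ne_zero]
end

section
/- For every real x > 0, ∫_0^{π/2} I_1(x·cos ϑ) dϑ = (cosh(x) − 1)/x, where I_1(y) = ∑_{m=0}^∞ 1/(m!·Γ(m+2))·(y/2)^{2m+1}. -/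
open Real MeasureTheory

/-- The modified Bessel function of the first kind of order 1, defined by its series. -/
noncomputable def besselI1 (y : ℝ) : ℝ :=
  ∑' m : ℕ, 1 / (m.factorial * Real.Gamma (m + 2)) * (y / 2) ^ (2 * m + 1)

/-!
Expand `I₁(x cos ϑ)` in its power series and integrate term by term, which is legitimate because
the series is dominated, uniformly in `ϑ`, by the exponential series of `(x/2)²`. The Wallis integral
`∫₀^{π/2} cos^{2m+1} = 4^m (m!)² / (2m+1)!` turns the `m`-th term into `x^{2m+1} / (2m+2)!`,
and summing these is dividing the series of `cosh x - 1` by `x`.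
-/

open scoped Nat

noncomputable def besselI1Term (y : ℝ) (m : ℕ) : ℝ :=
  (y / 2) ^ (2 * m + 1) / (m ! * (m + 1)! : ℝ)

theorem besselI1_eq_tsum (y : ℝ) : besselI1 y = ∑' m, besselI1Term y m := by
  refine tsum_congr fun m => ?_
  have hGamma : Real.Gamma (m + 2) = ((m + 1)! : ℝ) := by
    rw [show (m : ℝ) + 2 = ((m + 1 : ℕ) : ℝ) + 1 by push_cast; ring, Gamma_nat_eq_factorial]
  rw [besselI1Term, hGamma, one_div_mul_eq_div]

theorem abs_besselI1Term_le (y : ℝ) (m : ℕ) :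
    |besselI1Term y m| ≤ |y / 2| * ((y / 2) ^ 2) ^ m / m ! := by
  have hfact : (m ! : ℝ) ≤ m ! * (m + 1)! :=
    le_mul_of_one_le_right (by positivity) (by exact_mod_cast (m + 1).factorial_pos)
  calc |besselI1Term y m| = |y / 2| * ((y / 2) ^ 2) ^ m / (m ! * (m + 1)! : ℝ) := by
        rw [besselI1Term, abs_div, abs_of_pos (by positivity : (0 : ℝ) < m ! * (m + 1)!),
          abs_pow, pow_succ', ← sq_abs, ← pow_mul]
    _ ≤ |y / 2| * ((y / 2) ^ 2) ^ m / m ! := by gcongr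

theorem summable_besselI1_bound (y : ℝ) :
    Summable fun m : ℕ => |y / 2| * ((y / 2) ^ 2) ^ m / m ! := by
  simpa only [mul_div_assoc] using (summable_pow_div_factorial ((y / 2) ^ 2)).mul_left |y / 2|

theorem hasSum_besselI1 (y : ℝ) : HasSum (besselI1Term y) (besselI1 y) := by
  rw [besselI1_eq_tsum]
  exact (summable_besselI1_bound y).of_norm_bounded (abs_besselI1Term_le y) |>.hasSum

theorem integral_cos_pow_two_mul_add_one (m : ℕ) :
    ∫ θ in (0 : ℝ)..(π / 2), cos θ ^ (2 * m + 1) = 4 ^ m * (m ! : ℝ) ^ 2 / (2 * m + 1)! := by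
  induction m with
  | zero => simp
  | succ n ih =>
    rw [show 2 * (n + 1) + 1 = 2 * n + 1 + 2 by ring, integral_cos_pow, cos_pi_div_two, sin_zero, ih,
      Nat.factorial_succ n, show 2 * n + 1 + 2 = 2 * n + 1 + 1 + 1 by ring,
      Nat.factorial_succ (2 * n + 1 + 1), Nat.factorial_succ (2 * n + 1)]
    push_cast
    field_simp
    ring

theorem integral_besselI1Term_mul_cos (x : ℝ) (m : ℕ) :
    ∫ θ in (0 : ℝ)..(π / 2), besselI1Term (x * cos θ) m = x ^ (2 * m + 1) / (2 * m + 2)! := by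
  have hterm : ∀ θ, besselI1Term (x * cos θ) m
      = (x / 2) ^ (2 * m + 1) / (m ! * (m + 1)! : ℝ) * cos θ ^ (2 * m + 1) := fun θ => by
    rw [besselI1Term, mul_div_right_comm, mul_pow, div_mul_eq_mul_div]
  simp_rw [hterm]
  rw [intervalIntegral.integral_const_mul, integral_cos_pow_two_mul_add_one,
    show 2 * m + 2 = 2 * m + 1 + 1 by ring, Nat.factorial_succ (2 * m + 1), Nat.factorial_succ m,
    show (4 : ℝ) ^ m = 2 ^ (2 * m) by rw [pow_mul]; norm_num, div_pow]
  push_cast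
  field_simp
  ring

theorem hasSum_intervalIntegral_besselI1Term_mul_cos (x a b : ℝ) :
    HasSum (fun m => ∫ θ in a..b, besselI1Term (x * cos θ) m)
      (∫ θ in a..b, besselI1 (x * cos θ)) := by
  refine intervalIntegral.hasSum_integral_of_dominated_convergence
    (fun m _ => |x / 2| * ((x / 2) ^ 2) ^ m / m !) (fun m => ?_) (fun m => ?_)
    (.of_forall fun _ _ => summable_besselI1_bound x) intervalIntegrable_const
    (.of_forall fun θ _ => hasSum_besselI1 (x * cos θ))
  · exact (Continuous.aestronglyMeasurable (by unfold besselI1Term; fun_prop))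
  · refine .of_forall fun θ _ => (abs_besselI1Term_le _ m).trans ?_
    have hcos : |x * cos θ / 2| ≤ |x / 2| := by
      rw [mul_div_right_comm, abs_mul]
      exact mul_le_of_le_one_right (abs_nonneg _) (abs_cos_le_one θ)
    have hsq : (x * cos θ / 2) ^ 2 ≤ (x / 2) ^ 2 := sq_le_sq.mpr hcos
    gcongr

theorem hasSum_pow_div_factorial_cosh_sub_one (x : ℝ) :
    HasSum (fun m : ℕ => x ^ (2 * m + 1) / (2 * m + 2)!) ((cosh x - 1) / x) := by
  have hshift : HasSum (fun m : ℕ => x ^ (2 * m + 2) / (2 * m + 2)!) (cosh x - 1) := by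
    simpa [mul_add] using (hasSum_nat_add_iff' 1).mpr (hasSum_cosh x)
  have hterm (m : ℕ) : x ^ (2 * m + 2) / (2 * m + 2)! / x = x ^ (2 * m + 1) / (2 * m + 2)! := by
    rcases eq_or_ne x 0 with rfl | hx
    · simp -- both sides vanish, the right one through `0 / 0 = 0`
    · rw [div_right_comm, pow_succ x (2 * m + 1), mul_div_cancel_right₀ _ hx]
  simpa only [hterm] using hshift.div_const x

theorem integral_besselI1_general (x : ℝ) :
    ∫ ϑ in (0:ℝ)..(π / 2), besselI1 (x * Real.cos ϑ)
      = (Real.cosh x - 1) / x := by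
  have h := hasSum_intervalIntegral_besselI1Term_mul_cos x 0 (π / 2)
  simp_rw [integral_besselI1Term_mul_cos] at h
  exact h.unique (hasSum_pow_div_factorial_cosh_sub_one x)

theorem integral_besselI1 (x : ℝ) (hx : 0 < x) :
    ∫ ϑ in (0:ℝ)..(π / 2), besselI1 (x * Real.cos ϑ)
      = (Real.cosh x - 1) / x :=
  integral_besselI1_general x
end
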